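/- For all integers k ≥ 1 and n ≥ 3, the chromatic number of the square of T_{4k,n} = C_{4k} □ C_n satisfies: χ(T_{4k,n}²) ≤ 6 if n ≡ 0 (mod 3); χ(T_{4k,n}²) ≤ 8 if n = 4; and χ(T_{4k,n}²) ≤ 7 otherwise. -/

import Mathlib

open SimpleGraph

/-- The square of a simple graph `G`: distinct vertices are adjacent iff they are
adjacent in `G` or have a common neighbor in `G` (i.e. are at distance at most 2). -/
def SimpleGraph.square {V : Type*} (G : SimpleGraph V) : SimpleGraph V where
  Adj u v := u ≠ v ∧ (G.Adj u v ∨ ∃ w, G.Adj u w ∧ G.Adj w v)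
  symm := ⟨fun u v => by
    rintro ⟨h, h' | ⟨w, hw1, hw2⟩⟩
    exacts [⟨h.symm, Or.inl h'.symm⟩, ⟨h.symm, Or.inr ⟨w, hw2.symm, hw1.symm⟩⟩]⟩
  loopless := ⟨fun v => by simp⟩

/-- The toroidal grid `T_{m,n} = C_m □ C_n`. -/
def toroidalGrid (m n : ℕ) : SimpleGraph (Fin m × Fin n) :=
  SimpleGraph.cycleGraph m □ SimpleGraph.cycleGraph n

/-- The independence number of a graph: the maximum size of an independent set,
i.e. the clique number of the complement graph. -/
noncomputable def SimpleGraph.indepNum' {V : Type*} (G : SimpleGraph V) : ℕ :=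
  Gᶜ.cliqueNum

/-!
Colour the vertex `(i, j)` of `C_{4k} □ C_n` like the vertex `(i mod 4, j)` of `C_4 □ C_n`:
reduction mod 4 is a homomorphism of cycles that keeps vertices at distance at most two
apart, so proper colourings of `(C_4 □ C_n)²` pull back. Such a colouring is a cyclic word of
`n` columns, each a colouring of `C_4`, and it is proper iff every three cyclically consecutive
columns form a valid window. Valid cyclic words starting with the same two columns can be
spliced together, so inserting copies of a valid 3-column word `A B C` with 6 colours into valid
words `A B …` of length 5 and 7 with 7 colours gives all lengths `3t + 3`, `3t + 5`, `3t + 7`;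
`n = 4` takes a separate 4-column word with 8 colours.
-/

namespace List

variable {α : Type*} (R : α → α → α → Prop)

def TripleChain : List α → Prop
  | a :: b :: c :: l => R a b c ∧ TripleChain (b :: c :: l)
  | _ => True

def CyclicTripleChain (w : List α) : Prop :=
  TripleChain R (w ++ w.take 2)

instance decidableTripleChain [∀ a b c, Decidable (R a b c)] : ∀ l, Decidable (TripleChain R l)
  | _ :: b :: c :: l =>
    haveI := decidableTripleChain (b :: c :: l); inferInstanceAs (Decidable (_ ∧ _))
  | [] | [_] | [_, _] => isTrue trivial

instance [∀ a b c, Decidable (R a b c)] (w : List α) : Decidable (CyclicTripleChain R w) :=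
  decidableTripleChain R _

variable {R}

theorem TripleChain.rel_getElem : ∀ {l : List α}, TripleChain R l →
    ∀ i (h : i + 2 < l.length), R l[i] l[i + 1] l[i + 2]
  | _ :: _ :: _ :: _, ⟨hr, _⟩, 0, _ => hr
  | _ :: _ :: _ :: _, ⟨_, hl⟩, i + 1, h => hl.rel_getElem i (by simp at h ⊢; omega)

theorem TripleChain.append {a b : α} {l₂ : List α} (h₂ : TripleChain R (a :: b :: l₂)) :
    ∀ {l₁ : List α}, TripleChain R (l₁ ++ [a, b]) → TripleChain R (l₁ ++ a :: b :: l₂)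
  | [], _ => h₂
  | [_], ⟨hr, _⟩ => ⟨hr, h₂⟩
  | [_, y], ⟨hr, h₁⟩ => ⟨hr, TripleChain.append h₂ (l₁ := [y]) h₁⟩
  | _ :: y :: z :: l, ⟨hr, h₁⟩ => ⟨hr, TripleChain.append h₂ (l₁ := y :: z :: l) h₁⟩

theorem CyclicTripleChain.append {a b : α} {u v : List α}
    (hu : CyclicTripleChain R (a :: b :: u)) (hv : CyclicTripleChain R (a :: b :: v)) :
    CyclicTripleChain R (a :: b :: (u ++ a :: b :: v)) := by
  have := TripleChain.append (l₂ := v ++ [a, b]) (l₁ := a :: b :: u) hv hu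
  unfold CyclicTripleChain
  convert this using 1
  simp

theorem CyclicTripleChain.replicate_append {a b c : α} {p : List α}
    (habc : CyclicTripleChain R [a, b, c]) (hp : CyclicTripleChain R (a :: b :: p)) (t : ℕ) :
    CyclicTripleChain R (a :: b :: ((replicate t [c, a, b]).flatten ++ p)) := by
  induction t with
  | zero => simpa using hp
  | succ t ih => simpa [replicate_succ] using habc.append (u := [c]) ih

theorem CyclicTripleChain.rel_getElem_mod {w : List α} (hw : CyclicTripleChain R w)
    (hn : 2 ≤ w.length) (i : ℕ) :
    R (w[i % w.length]'(Nat.mod_lt _ (by omega))) (w[(i + 1) % w.length]'(Nat.mod_lt _ (by omega)))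
      (w[(i + 2) % w.length]'(Nat.mod_lt _ (by omega))) := by
  have hwrap : ∀ j (hj : j < w.length + 2),
      (w ++ w.take 2)[j]'(by simp; omega) = w[j % w.length]'(Nat.mod_lt _ (by omega)) := by
    intro j hj
    rw [getElem_append]
    split_ifs with h
    · simp [Nat.mod_eq_of_lt h]
    · simp only [getElem_take]
      congr 1
      rw [Nat.mod_eq_sub_mod (by omega), Nat.mod_eq_of_lt (by omega)]
  have hi := Nat.mod_lt i (by omega : 0 < w.length)
  have := hw.rel_getElem (i % w.length) (by simp; omega)
  rw [hwrap _ (by omega), hwrap _ (by omega), hwrap _ (by omega)] at this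
  simpa only [Nat.mod_mod, Nat.mod_add_mod] using this

end List

theorem Function.Periodic.eq_of_modEq {α : Type*} {f : ℕ → α} {n a b : ℕ}
    (hf : Function.Periodic f n) (h : a ≡ b [MOD n]) : f a = f b := by
  rw [← hf.map_mod_nat a, ← hf.map_mod_nat b, h]

namespace SimpleGraph

theorem cycleGraph_adj_iff_modEq {n : ℕ} {i j : Fin (n + 2)} :
    (cycleGraph (n + 2)).Adj i j ↔
      i.val + 1 ≡ j.val [MOD n + 2] ∨ j.val + 1 ≡ i.val [MOD n + 2] := by
  rw [cycleGraph_adj, sub_eq_iff_eq_add, sub_eq_iff_eq_add, Fin.ext_iff, Fin.ext_iff, Fin.val_add,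
    Fin.val_add, Fin.val_one, Nat.ModEq, Nat.ModEq, Nat.mod_eq_of_lt i.isLt,
    Nat.mod_eq_of_lt j.isLt, add_comm 1, add_comm 1]
  exact or_comm.trans (or_congr eq_comm eq_comm)

theorem modEq_of_cycleGraph_adj {n : ℕ} {i j : Fin n} (h : (cycleGraph n).Adj i j) :
    i.val + 1 ≡ j.val [MOD n] ∨ j.val + 1 ≡ i.val [MOD n] := by
  match n, i, j, h with
  | 0, i, _, _ => exact i.elim0
  | 1, _, _, h => exact absurd h cycleGraph_one_adj
  | _ + 2, _, _, h => exact cycleGraph_adj_iff_modEq.mp h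

theorem modEq_two_of_cycleGraph_adj_adj {n : ℕ} {u w v : Fin n} (huw : (cycleGraph n).Adj u w)
    (hwv : (cycleGraph n).Adj w v) (huv : u ≠ v) :
    u.val + 2 ≡ v.val [MOD n] ∨ v.val + 2 ≡ u.val [MOD n] := by
  have hne : ¬u.val ≡ v.val [MOD n] := fun h => huv (Fin.ext (h.eq_of_lt_of_lt u.isLt v.isLt))
  rcases modEq_of_cycleGraph_adj huw with h₁ | h₁ <;>
    rcases modEq_of_cycleGraph_adj hwv with h₂ | h₂
  · exact Or.inl ((h₁.add_right 1).trans h₂)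
  · exact (hne ((h₁.trans h₂.symm).add_right_cancel' 1)).elim
  · exact (hne (h₁.symm.trans h₂)).elim
  · exact Or.inr ((h₂.add_right 1).trans h₁)

def cycleGraphMod {m d : ℕ} (hdm : d ∣ m) (hd : 3 ≤ d) : cycleGraph m →g cycleGraph d where
  toFun i := ⟨i.val % d, Nat.mod_lt _ (by omega)⟩
  map_rel' {i j} h := by
    obtain ⟨d, rfl⟩ : ∃ d', d = d' + 2 := ⟨d - 2, by omega⟩
    have reduce {a b : ℕ} (h : a + 1 ≡ b [MOD m]) : a % (d + 2) + 1 ≡ b % (d + 2) [MOD d + 2] :=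
      ((Nat.mod_modEq _ _).add_right 1).trans ((h.of_dvd hdm).trans (Nat.mod_modEq _ _).symm)
    exact cycleGraph_adj_iff_modEq.mpr ((modEq_of_cycleGraph_adj h).imp reduce reduce)

theorem cycleGraphMod_ne_of_square_adj {m d : ℕ} (hdm : d ∣ m) (hd : 3 ≤ d) {u v : Fin m}
    (h : (cycleGraph m).square.Adj u v) : cycleGraphMod hdm hd u ≠ cycleGraphMod hdm hd v := by
  obtain ⟨huv, hadj | ⟨w, huw, hwv⟩⟩ := h
  · exact ((cycleGraphMod hdm hd).map_adj hadj).ne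
  intro heq
  have hmod : u.val ≡ v.val [MOD d] := congrArg Fin.val heq
  have not_modEq_add_two {a b : ℕ} (hab : a ≡ b [MOD d]) (h : a + 2 ≡ b [MOD d]) : False :=
    absurd (Nat.le_of_dvd two_pos
      (Nat.modEq_zero_iff_dvd.mp ((h.trans hab.symm).add_left_cancel' a))) (by omega)
  rcases modEq_two_of_cycleGraph_adj_adj huw hwv huv with h | h
  · exact not_modEq_add_two hmod (h.of_dvd hdm)
  · exact not_modEq_add_two hmod.symm (h.of_dvd hdm)

variable {V W α : Type*} {G : SimpleGraph V} {G' : SimpleGraph W}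

theorem Adj.square_adj {u v : V} (h : G.Adj u v) : G.square.Adj u v := ⟨h.ne, Or.inl h⟩

def Hom.square (φ : G →g G') (hφ : ∀ u v, G.square.Adj u v → φ u ≠ φ v) :
    G.square →g G'.square where
  toFun := φ
  map_rel' {u v} h := by
    refine ⟨hφ u v h, ?_⟩
    obtain ⟨-, hadj | ⟨w, huw, hwv⟩⟩ := h
    exacts [Or.inl (φ.map_adj hadj), Or.inr ⟨φ w, φ.map_adj huw, φ.map_adj hwv⟩]

theorem square_boxProd_adj {H : SimpleGraph W} {u v : V} {x y : W}
    (h : (G □ H).square.Adj (u, x) (v, y)) :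
    (x = y ∧ G.square.Adj u v) ∨ (u = v ∧ H.square.Adj x y) ∨ (G.Adj u v ∧ H.Adj x y) := by
  obtain ⟨hne, hadj | ⟨⟨w, z⟩, h₁, h₂⟩⟩ := h
  · rcases boxProd_adj.mp hadj with ⟨hG, rfl⟩ | ⟨hH, rfl⟩
    exacts [Or.inl ⟨rfl, hG.square_adj⟩, Or.inr (Or.inl ⟨rfl, hH.square_adj⟩)]
  rcases boxProd_adj.mp h₁ with ⟨hG₁, rfl⟩ | ⟨hH₁, rfl⟩ <;>
    rcases boxProd_adj.mp h₂ with ⟨hG₂, rfl⟩ | ⟨hH₂, rfl⟩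
  · exact Or.inl ⟨rfl, fun huv => hne (by rw [huv]), Or.inr ⟨w, hG₁, hG₂⟩⟩
  · exact Or.inr (Or.inr ⟨hG₁, hH₂⟩)
  · exact Or.inr (Or.inr ⟨hG₂, hH₁⟩)
  · exact Or.inr (Or.inl ⟨rfl, fun hxy => hne (by rw [hxy]), Or.inr ⟨z, hH₁, hH₂⟩⟩)

instance [Fintype V] [DecidableEq V] [DecidableRel G.Adj] : DecidableRel G.square.Adj :=
  fun u v => inferInstanceAs (Decidable (u ≠ v ∧ (G.Adj u v ∨ ∃ w, G.Adj u w ∧ G.Adj w v)))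

variable (G) in
/-- Three consecutive columns `c, d, e` of a colouring of `(G □ C_n)²`, seen as colourings of `G`,
satisfy every constraint that starts at the column `c`. -/
def IsColumnWindow (c d e : V → α) : Prop :=
  (∀ u v, G.square.Adj u v → c u ≠ c v) ∧ (∀ u v, (u = v ∨ G.Adj u v) → c u ≠ d v) ∧
    ∀ v, c v ≠ e v

instance [Fintype V] [DecidableEq V] [DecidableEq α] [DecidableRel G.Adj] (c d e : V → α) :
    Decidable (IsColumnWindow G c d e) :=
  inferInstanceAs (Decidable (_ ∧ _ ∧ _))

theorem IsColumnWindow.comp {c d e : W → α} (h : IsColumnWindow G' c d e) (φ : G →g G')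
    (hφ : ∀ u v, G.square.Adj u v → φ u ≠ φ v) : IsColumnWindow G (c ∘ φ) (d ∘ φ) (e ∘ φ) := by
  refine ⟨fun u v huv => h.1 _ _ ((φ.square hφ).map_adj huv), fun u v huv => h.2.1 _ _ ?_,
    fun v => h.2.2 (φ v)⟩
  rcases huv with rfl | huv
  exacts [Or.inl rfl, Or.inr (φ.map_adj huv)]

theorem colorable_square_boxProd_cycleGraph {n c : ℕ} (f : ℕ → V → ℕ)
    (hf : Function.Periodic f n) (hwin : ∀ i, IsColumnWindow G (f i) (f (i + 1)) (f (i + 2)))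
    (hc : ∀ i v, f i v < c) : (G □ cycleGraph n).square.Colorable c := by
  have hnext : ∀ x y : Fin n, (cycleGraph n).Adj x y →
      ∀ u v, (u = v ∨ G.Adj u v) → f x u ≠ f y v := by
    intro x y hxy u v huv
    rcases modEq_of_cycleGraph_adj hxy with h | h
    · rw [← hf.eq_of_modEq h]
      exact (hwin x).2.1 u v huv
    · rw [← hf.eq_of_modEq h]
      refine ((hwin y).2.1 v u ?_).symm
      exact huv.imp Eq.symm Adj.symm
  refine (colorable_iff_exists_bdd_nat_coloring c).mpr
    ⟨Coloring.mk (fun p => f p.2 p.1) fun {p q} hpq => ?_, fun p => hc _ _⟩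
  obtain ⟨u, x⟩ := p
  obtain ⟨v, y⟩ := q
  rcases square_boxProd_adj hpq with ⟨rfl, huv⟩ | ⟨rfl, hxy, hadj | ⟨z, hxz, hzy⟩⟩ | ⟨huv, hxy⟩
  · exact (hwin x).1 u v huv
  · exact hnext x y hadj u u (Or.inl rfl)
  · rcases modEq_two_of_cycleGraph_adj_adj hxz hzy hxy with h | h
    · rw [← hf.eq_of_modEq h]
      exact (hwin x).2.2 u
    · rw [← hf.eq_of_modEq h]
      exact ((hwin y).2.2 u).symm
  · exact hnext x y hxy u v (Or.inr huv)

end SimpleGraph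

open List

def HasColumnWord (d n c : ℕ) : Prop :=
  ∃ w : List (Fin d → ℕ), w.length = n ∧ CyclicTripleChain (IsColumnWindow (cycleGraph d)) w ∧
    ∀ col ∈ w, ∀ v, col v < c

theorem HasColumnWord.chromaticNumber_square_toroidalGrid_le {m d n c : ℕ}
    (h : HasColumnWord d n c) (hdm : d ∣ m) (hd : 3 ≤ d) (hn : 2 ≤ n) :
    (toroidalGrid m n).square.chromaticNumber ≤ c := by
  obtain ⟨w, rfl, hw, hc⟩ := h
  have hpos : 0 < w.length := by omega
  let φ := cycleGraphMod hdm hd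
  refine (colorable_square_boxProd_cycleGraph (fun i => w[i % w.length]'(Nat.mod_lt _ hpos) ∘ φ)
    (fun i => by simp) (fun i => ?_) (fun i v => hc _ (getElem_mem _) _)).chromaticNumber_le
  simpa only [Nat.add_mod_right] using
    (hw.rel_getElem_mod hn i).comp φ fun u v => cycleGraphMod_ne_of_square_adj hdm hd

theorem hasColumnWord_of_cyclicTripleChain {d n c : ℕ} {a b e : Fin d → ℕ} {p : List (Fin d → ℕ)}
    (habe : CyclicTripleChain (IsColumnWindow (cycleGraph d)) [a, b, e])
    (hp : CyclicTripleChain (IsColumnWindow (cycleGraph d)) (a :: b :: p))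
    (hc : ∀ col ∈ e :: a :: b :: p, ∀ v, col v < c) (t : ℕ) (hn : p.length + 2 + 3 * t = n) :
    HasColumnWord d n c := by
  refine ⟨_, ?_, habe.replicate_append hp t, fun col hcol v => hc col ?_ v⟩
  · simp only [length_cons, length_append, length_flatten, map_replicate, sum_replicate,
      smul_eq_mul, length_nil, ← hn]
    omega
  · simp only [mem_cons, mem_append, mem_flatten, mem_replicate] at hcol ⊢
    aesop

def columns3 : List (Fin 4 → ℕ) := [![0, 1, 2, 3], ![2, 3, 4, 5], ![4, 5, 0, 1]]

def columns5 : List (Fin 4 → ℕ) :=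
  [![0, 1, 2, 3], ![2, 3, 4, 5], ![1, 5, 6, 0], ![3, 2, 1, 4], ![5, 4, 0, 6]]

def columns7 : List (Fin 4 → ℕ) :=
  [![0, 1, 2, 3], ![2, 3, 4, 5], ![1, 5, 0, 6], ![0, 6, 1, 4], ![3, 4, 2, 5], ![2, 0, 3, 6],
    ![4, 6, 5, 1]]

def columns4 : List (Fin 4 → ℕ) := [![0, 1, 2, 3], ![2, 3, 0, 1], ![4, 5, 6, 7], ![6, 7, 4, 5]]

theorem cyclicTripleChain_columns3 :
    CyclicTripleChain (IsColumnWindow (cycleGraph 4)) columns3 := by decide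

theorem cyclicTripleChain_columns5 :
    CyclicTripleChain (IsColumnWindow (cycleGraph 4)) columns5 := by decide

theorem cyclicTripleChain_columns7 :
    CyclicTripleChain (IsColumnWindow (cycleGraph 4)) columns7 := by decide

theorem hasColumnWord_three_mul_add_three (t : ℕ) : HasColumnWord 4 (3 * t + 3) 6 :=
  hasColumnWord_of_cyclicTripleChain cyclicTripleChain_columns3
    cyclicTripleChain_columns3 (by decide) t (by simp; omega)

theorem hasColumnWord_three_mul_add_five (t : ℕ) : HasColumnWord 4 (3 * t + 5) 7 :=
  hasColumnWord_of_cyclicTripleChain cyclicTripleChain_columns3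
    cyclicTripleChain_columns5 (by decide) t (by simp; omega)

theorem hasColumnWord_three_mul_add_seven (t : ℕ) : HasColumnWord 4 (3 * t + 7) 7 :=
  hasColumnWord_of_cyclicTripleChain cyclicTripleChain_columns3
    cyclicTripleChain_columns7 (by decide) t (by simp; omega)

theorem hasColumnWord_four_four : HasColumnWord 4 4 8 :=
  ⟨columns4, rfl, by decide, by decide⟩

theorem stmt5_general (k n : ℕ) (hn : 3 ≤ n) :
    (n % 3 = 0 → (toroidalGrid (4 * k) n).square.chromaticNumber ≤ 6) ∧
    (n = 4 → (toroidalGrid (4 * k) n).square.chromaticNumber ≤ 8) ∧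
    (n % 3 ≠ 0 → n ≠ 4 → (toroidalGrid (4 * k) n).square.chromaticNumber ≤ 7) := by
  have key {c : ℕ} (h : HasColumnWord 4 n c) :
      (toroidalGrid (4 * k) n).square.chromaticNumber ≤ c :=
    h.chromaticNumber_square_toroidalGrid_le (dvd_mul_right 4 k) (by norm_num) (by omega)
  refine ⟨fun h3 => key ?_, fun h4 => key (h4 ▸ hasColumnWord_four_four), fun h3 h4 => key ?_⟩
  · obtain ⟨t, rfl⟩ : ∃ t, n = 3 * t + 3 := ⟨n / 3 - 1, by omega⟩
    exact hasColumnWord_three_mul_add_three t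
  · by_cases h2 : n % 3 = 2
    · obtain ⟨t, rfl⟩ : ∃ t, n = 3 * t + 5 := ⟨n / 3 - 1, by omega⟩
      exact hasColumnWord_three_mul_add_five t
    · obtain ⟨t, rfl⟩ : ∃ t, n = 3 * t + 7 := ⟨n / 3 - 2, by omega⟩
      exact hasColumnWord_three_mul_add_seven t

theorem stmt5 (k n : ℕ) (hk : 1 ≤ k) (hn : 3 ≤ n) :
    (n % 3 = 0 → (toroidalGrid (4 * k) n).square.chromaticNumber ≤ 6) ∧
    (n = 4 → (toroidalGrid (4 * k) n).square.chromaticNumber ≤ 8) ∧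
    (n % 3 ≠ 0 → n ≠ 4 → (toroidalGrid (4 * k) n).square.chromaticNumber ≤ 7) :=
  stmt5_general k n hn
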